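/- arXiv:2105.05427 — 11 statements merged into one kernel-verified Lean document; each statement's English description precedes it below -/
import Mathlib

section
/- The function h(β) = (1−3β)·ln β + 2β(β−1) satisfies h(β) > 0 for β > 1 and h(β) < 0 for 0 < β < 1. -/
/-!
Since `sinh (log β) = (β - β⁻¹) / 2` and `t < sinh t` exactly for `t > 0`, the logarithm lies
strictly below `(β - β⁻¹) / 2` for `β > 1` and strictly above it for `β < 1`. Substituting this
bound into `h` for `β > 1/3`, where `1 - 3β < 0`, leaves `(β - 1)³ / (2β)`, which has the sign of `β - 1`.
For `β ≤ 1/3` the coefficient `1 - 3β` is nonnegative and `log β ≤ β - 1` gives `h β ≤ -(β - 1)²`.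
-/

open Real

lemma Real.log_lt_half_sub_inv {x : ℝ} (hx : 1 < x) : log x < (x - x⁻¹) / 2 := by
  rw [← sinh_log (by linarith)]
  exact self_lt_sinh_iff.2 (log_pos hx)

lemma Real.half_sub_inv_lt_log {x : ℝ} (hx₀ : 0 < x) (hx₁ : x < 1) : (x - x⁻¹) / 2 < log x := by
  rw [← sinh_log hx₀]
  exact sinh_lt_self_iff.2 (log_neg hx₀ hx₁)

lemma one_sub_three_mul_mul_half_sub_inv_add_eq {β : ℝ} (hβ : β ≠ 0) :
    (1 - 3 * β) * ((β - β⁻¹) / 2) + 2 * β * (β - 1) = (β - 1) ^ 3 / (2 * β) := by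
  field_simp
  ring

theorem stmt_2 (β : ℝ) :
    (1 < β → (1 - 3 * β) * Real.log β + 2 * β * (β - 1) > 0) ∧
    (0 < β → β < 1 → (1 - 3 * β) * Real.log β + 2 * β * (β - 1) < 0) := by
  refine ⟨fun hβ => ?_, fun hβ₀ hβ₁ => ?_⟩
  · have hcube : 0 < (β - 1) ^ 3 / (2 * β) := div_pos (pow_pos (by linarith) 3) (by linarith)
    rw [← one_sub_three_mul_mul_half_sub_inv_add_eq (by positivity)] at hcube
    linarith [mul_lt_mul_of_neg_left (log_lt_half_sub_inv hβ) (by linarith : 1 - 3 * β < 0)]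
  rcases le_or_gt β (1 / 3) with hsmall | hlarge
  · nlinarith [mul_le_mul_of_nonneg_left (log_le_sub_one_of_pos hβ₀) (by linarith : 0 ≤ 1 - 3 * β)]
  · have hcube : (β - 1) ^ 3 / (2 * β) < 0 :=
      div_neg_of_neg_of_pos (Odd.pow_neg (by decide) (by linarith)) (by linarith)
    rw [← one_sub_three_mul_mul_half_sub_inv_add_eq hβ₀.ne'] at hcube
    linarith [mul_lt_mul_of_neg_left (half_sub_inv_lt_log hβ₀ hβ₁) (by linarith : 1 - 3 * β < 0)]
end

section
/- The function g(β) = (β²−3β)·ln β + 2(β−1) satisfies g(β) > 0 for β > 1 and g(β) < 0 for 0 < β < 1. -/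
/-!
One has the identity
`2 ((β ^ 2 - 3 β) log β + 2 (β - 1)) = 2 (3 - β) β (sinh (log β) - log β) + (β - 1) ^ 3`,
and `sinh t - t` has the sign of `t`. So for `β < 1` both terms are negative and for `1 < β < 3`
both are positive; for `β ≥ 3` every summand of the left-hand side is already nonnegative, the last
one positive.
-/

open Real

lemma two_mul_sq_sub_mul_log_add_eq {β : ℝ} (hβ : 0 < β) :
    2 * ((β ^ 2 - 3 * β) * log β + 2 * (β - 1)) =
      2 * (3 - β) * β * (sinh (log β) - log β) + (β - 1) ^ 3 := by
  rw [sinh_log hβ]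
  field_simp
  ring

theorem stmt_3 (β : ℝ) :
    (1 < β → (β ^ 2 - 3 * β) * Real.log β + 2 * (β - 1) > 0) ∧
    (0 < β → β < 1 → (β ^ 2 - 3 * β) * Real.log β + 2 * (β - 1) < 0) := by
  constructor
  · intro h1
    rcases lt_or_ge β 3 with h3 | h3
    · have hgap : log β < sinh (log β) := self_lt_sinh_iff.mpr (log_pos h1)
      have hprod : 0 < 2 * (3 - β) * β * (sinh (log β) - log β) :=
        mul_pos (by nlinarith) (by linarith)
      have hcube : 0 < (β - 1) ^ 3 := pow_pos (by linarith) 3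
      linarith [two_mul_sq_sub_mul_log_add_eq (zero_lt_one.trans h1)]
    · have : 0 ≤ (β ^ 2 - 3 * β) * log β := mul_nonneg (by nlinarith) (log_pos h1).le
      linarith
  · intro h0 h1
    have hgap : sinh (log β) < log β := sinh_lt_self_iff.mpr (log_neg h0 h1)
    have hprod : 2 * (3 - β) * β * (sinh (log β) - log β) < 0 :=
      mul_neg_of_pos_of_neg (by nlinarith) (by linarith)
    have hcube : (β - 1) ^ 3 < 0 := Odd.pow_neg (by decide) (by linarith)
    linarith [two_mul_sq_sub_mul_log_add_eq h0]
end

section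
/- For all β > 0 with β ≠ 1, we have −((3β−1)/(β−1))·ln β + 2β > 0. -/
/-!
Write the expression as `N β / (β - 1)` with `N β = 2β(β - 1) - (3β - 1) log β`; it suffices that
`N β` has the sign of `β - 1`. Since `t` and `sinh t - t` have the same sign, `log β` lies between `0`
and `sinh (log β) = (β - β⁻¹) / 2`, and replacing `log β` by this bound turns `N β` into
`(β - 1)³ / (2β)`. This works as long as `3β - 1 > 0`; for `β ≤ 1/3` both terms of `N β` are negative.
-/

open Real

namespace Real

theorem log_lt_half_sub_inv_s4 {x : ℝ} (hx : 1 < x) : log x < (x - x⁻¹) / 2 := by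
  rw [← sinh_log (by linarith)]
  exact self_lt_sinh_iff.2 (log_pos hx)

theorem half_sub_inv_lt_log_s4 {x : ℝ} (hx₀ : 0 < x) (hx₁ : x < 1) : (x - x⁻¹) / 2 < log x := by
  rw [← sinh_log hx₀]
  exact sinh_lt_self_iff.2 (log_neg hx₀ hx₁)

end Real

lemma two_mul_mul_sub_one_sub_mul_half_sub_inv {β : ℝ} (hβ : β ≠ 0) :
    2 * β * (β - 1) - (3 * β - 1) * ((β - β⁻¹) / 2) = (β - 1) ^ 3 / (2 * β) := by
  field_simp
  ring

lemma two_mul_mul_sub_one_sub_mul_log_pos {β : ℝ} (hβ : 1 < β) :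
    0 < 2 * β * (β - 1) - (3 * β - 1) * log β := by
  have hlog : (3 * β - 1) * log β < (3 * β - 1) * ((β - β⁻¹) / 2) :=
    mul_lt_mul_of_pos_left (log_lt_half_sub_inv_s4 hβ) (by linarith)
  have hcube : 0 < (β - 1) ^ 3 / (2 * β) := by
    have : 0 < β - 1 := by linarith
    positivity
  linarith [two_mul_mul_sub_one_sub_mul_half_sub_inv (β := β) (by positivity)]

lemma two_mul_mul_sub_one_sub_mul_log_neg {β : ℝ} (hβ₀ : 0 < β) (hβ₁ : β < 1) :
    2 * β * (β - 1) - (3 * β - 1) * log β < 0 := by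
  have hlog_neg : log β < 0 := log_neg hβ₀ hβ₁
  rcases le_or_gt β (1 / 3) with hsmall | hlarge
  · nlinarith
  have hlog : (3 * β - 1) * ((β - β⁻¹) / 2) < (3 * β - 1) * log β :=
    mul_lt_mul_of_pos_left (half_sub_inv_lt_log_s4 hβ₀ hβ₁) (by linarith)
  have hcube : (β - 1) ^ 3 / (2 * β) < 0 :=
    div_neg_of_neg_of_pos (Odd.pow_neg (by decide) (by linarith)) (by positivity)
  linarith [two_mul_mul_sub_one_sub_mul_half_sub_inv hβ₀.ne']

theorem stmt_4 (β : ℝ) (hβ : 0 < β) (hne : β ≠ 1) :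
    -((3 * β - 1) / (β - 1)) * Real.log β + 2 * β > 0 := by
  have hβ₁ : β - 1 ≠ 0 := sub_ne_zero.mpr hne
  have hquot : -((3 * β - 1) / (β - 1)) * log β + 2 * β
      = (2 * β * (β - 1) - (3 * β - 1) * log β) / (β - 1) := by
    field_simp
    ring
  rw [hquot, gt_iff_lt]
  rcases hne.lt_or_gt with hlt | hgt
  · exact div_pos_of_neg_of_neg (two_mul_mul_sub_one_sub_mul_log_neg hβ hlt) (by linarith)
  · exact div_pos (two_mul_mul_sub_one_sub_mul_log_pos hgt) (by linarith)
end

section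
/- For all β > 0 with β ≠ 1, we have ((β²−3β)/(β−1))·ln β + 2 > 0. -/
/-!
Write `β = s²` and `t = log s`, so `log β = 2t`. Clearing the denominator `β - 1`, it suffices to
know that `t` has the sign of `s - 1` and the logarithmic–geometric mean inequality
`2 s log s ≤ s² - 1` for `s ≥ 1` (reversed for `s ≤ 1`), which is `t ≤ sinh t = (s - s⁻¹)/2`.
For `β ≥ 3` every term is then positive; for `β < 3` that bound leaves the factor
`s³ - 3s + 2 = (s - 1)²(s + 2) > 0`.
-/

open Real

lemma sq_sub_one_mul_log_pos {s : ℝ} (hs : 0 < s) (hs1 : s ≠ 1) : 0 < (s ^ 2 - 1) * log s := by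
  rcases lt_or_gt_of_ne hs1 with h | h
  · exact mul_pos_of_neg_of_neg (by nlinarith) (log_neg hs h)
  · exact mul_pos (by nlinarith) (log_pos h)

lemma sq_sub_one_sub_two_mul_log_eq {s : ℝ} (hs : 0 < s) :
    s ^ 2 - 1 - 2 * s * log s = 2 * s * (sinh (log s) - log s) := by
  rw [sinh_log hs]
  field_simp

lemma sq_sub_one_mul_sub_two_mul_log_nonneg {s : ℝ} (hs : 0 < s) :
    0 ≤ (s ^ 2 - 1) * (s ^ 2 - 1 - 2 * s * log s) := by
  rw [sq_sub_one_sub_two_mul_log_eq hs]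
  rcases le_total 1 s with h | h
  · have : log s ≤ sinh (log s) := self_le_sinh_iff.2 (log_nonneg h)
    exact mul_nonneg (by nlinarith) (by nlinarith)
  · have : sinh (log s) ≤ log s := sinh_le_self_iff.2 (log_nonpos hs.le h)
    exact mul_nonneg_of_nonpos_of_nonpos (by nlinarith) (by nlinarith)

lemma sq_sub_one_mul_cleared_pos {s t : ℝ} (hs : 0 < s) (hsign : 0 < (s ^ 2 - 1) * t)
    (hbound : 0 ≤ (s ^ 2 - 1) * (s ^ 2 - 1 - 2 * s * t)) :
    0 < (s ^ 2 - 1) * (((s ^ 2) ^ 2 - 3 * s ^ 2) * (2 * t) + 2 * (s ^ 2 - 1)) := by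
  have hu : 0 < (s ^ 2 - 1) ^ 2 := by nlinarith
  rcases le_or_gt 3 (s ^ 2) with h3 | h3
  · nlinarith [mul_nonneg (mul_nonneg (sq_nonneg s) (sub_nonneg.2 h3)) hsign.le]
  · have hcubic : 0 < (s - 1) ^ 2 * (s + 2) := by
      have : s ≠ 1 := by rintro rfl; norm_num at hsign
      have : 0 < (s - 1) ^ 2 := by positivity
      positivity
    nlinarith [mul_nonneg (mul_nonneg hs.le (sub_nonneg.2 h3.le)) hbound]

theorem stmt_5 (β : ℝ) (hβ : 0 < β) (hne : β ≠ 1) :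
    ((β ^ 2 - 3 * β) / (β - 1)) * Real.log β + 2 > 0 := by
  obtain ⟨s, hs, rfl⟩ : ∃ s : ℝ, 0 < s ∧ s ^ 2 = β := ⟨√β, sqrt_pos.2 hβ, sq_sqrt hβ.le⟩
  have hs1 : s ≠ 1 := by rintro rfl; norm_num at hne
  have hu : s ^ 2 - 1 ≠ 0 := by
    intro h; apply hs1; nlinarith [sq_nonneg (s - 1)]
  have hcleared := sq_sub_one_mul_cleared_pos hs (sq_sub_one_mul_log_pos hs hs1)
    (sq_sub_one_mul_sub_two_mul_log_nonneg hs)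
  have hdiv : ((s ^ 2) ^ 2 - 3 * s ^ 2) / (s ^ 2 - 1) * log (s ^ 2) + 2 =
      (s ^ 2 - 1) * (((s ^ 2) ^ 2 - 3 * s ^ 2) * (2 * log s) + 2 * (s ^ 2 - 1)) /
        (s ^ 2 - 1) ^ 2 := by
    rw [log_pow]
    field_simp
    ring
  rw [hdiv, gt_iff_lt]
  exact div_pos hcleared (by positivity)
end

section
/- In the random double auction with fixed commission r ∈ (0,1), the buyer's payoff from bidding b when his value is v_B, against ask a with b − a > r, equals ((b−a−r)/(1−r))·(v_B − (b+a+r)/2); for any fixed a, this expression (extended by 0 when b − a ≤ r) is maximized over b at b = v_B whenever v_B − a > r, i.e., truthful bidding is optimal. -/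
/-!
Completing the square: in the trade region the payoff equals
`((v_B - a - r)^2 - (v_B - b)^2) / (2(1 - r))`, so it is largest at `b = v_B`, where it is
nonnegative and therefore also beats the zero payoff outside the trade region.
-/

/-- Buyer's payoff in the random double auction with commission `r`, when bidding `b`
against ask `a` with true value `vB`. -/
noncomputable def buyerPayoff (r vB a b : ℝ) : ℝ :=
  if b - a > r then ((b - a - r) / (1 - r)) * (vB - (b + a + r) / 2) else 0

section BuyerPayoff

variable {r vB a b : ℝ}

theorem buyerPayoff_of_gt (hb : b - a > r) :
    buyerPayoff r vB a b = ((b - a - r) / (1 - r)) * (vB - (b + a + r) / 2) :=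
  if_pos hb

theorem buyerPayoff_of_le (hb : b - a ≤ r) : buyerPayoff r vB a b = 0 :=
  if_neg hb.not_gt

theorem buyerPayoff_eq_sq_sub_sq (hr1 : r < 1) (hb : b - a > r) :
    buyerPayoff r vB a b = ((vB - a - r) ^ 2 - (vB - b) ^ 2) / (2 * (1 - r)) := by
  rw [buyerPayoff_of_gt hb]
  field_simp [(sub_pos.mpr hr1).ne']
  ring

theorem buyerPayoff_le_self (hr1 : r < 1) (h : vB - a > r) (b : ℝ) :
    buyerPayoff r vB a b ≤ buyerPayoff r vB a vB := by
  have h1r : 0 < 2 * (1 - r) := by linarith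
  rw [buyerPayoff_eq_sq_sub_sq hr1 h, sub_self, zero_pow two_ne_zero, sub_zero]
  rcases le_or_gt (b - a) r with hb | hb
  · rw [buyerPayoff_of_le hb]
    positivity
  · rw [buyerPayoff_eq_sq_sub_sq hr1 hb]
    gcongr
    exact sub_le_self _ (sq_nonneg _)

end BuyerPayoff

theorem stmt_6_general (r vB a : ℝ) (hr1 : r < 1) (h : vB - a > r) :
    (∀ b : ℝ, b - a > r →
      buyerPayoff r vB a b = ((b - a - r) / (1 - r)) * (vB - (b + a + r) / 2)) ∧
    (∀ b : ℝ, buyerPayoff r vB a b ≤ buyerPayoff r vB a vB) :=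
  ⟨fun _ hb => buyerPayoff_of_gt hb, buyerPayoff_le_self hr1 h⟩

theorem stmt_6 (r vB a : ℝ) (hr0 : 0 < r) (hr1 : r < 1) (h : vB - a > r) :
    (∀ b : ℝ, b - a > r →
      buyerPayoff r vB a b = ((b - a - r) / (1 - r)) * (vB - (b + a + r) / 2)) ∧
    (∀ b : ℝ, buyerPayoff r vB a b ≤ buyerPayoff r vB a vB) :=
  stmt_6_general r vB a hr1 h
end

section
/- Let r ∈ (0,1) and define the measure π on [0,1]² with density π(v_B, v_S) = 2r²/(v_B − v_S)³ for v_B − v_S > r, v_B ≠ 1, v_S ≠ 0; density r²/(1−v_S)² on the segment {v_B = 1, 0 < v_S < 1−r}; density r²/v_B² on {v_S = 0, r < v_B < 1}; and an atom of mass r² at (1,0). Then π is a probability measure, i.e., its total mass equals 1. -/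
/-!
Integrating the density over `v_B` first, each slice of the triangle carries mass
`1 - r² / (1 - v_S)²`, so the triangle carries `(1 - r)²`; each edge segment carries `r - r²`,
and together with the atom `r²` this sums to `1`.
-/

open MeasureTheory Set

theorem integral_div_pow_of_pos {a b : ℝ} (c : ℝ) {n : ℕ} (hn : n ≠ 1) (ha : 0 < a)
    (hb : 0 < b) :
    ∫ x in a..b, c / x ^ n = c * (b ^ (1 - (n : ℤ)) - a ^ (1 - (n : ℤ))) / (1 - n) := by
  have h0 : (0 : ℝ) ∉ uIcc a b := fun h => (lt_min ha hb).not_ge h.1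
  have hzpow := integral_zpow (a := a) (b := b) (n := -n) (Or.inr ⟨by omega, h0⟩)
  simp only [div_eq_mul_inv, intervalIntegral.integral_const_mul, ← zpow_natCast, ← zpow_neg,
    hzpow]
  push_cast
  ring_nf

theorem integral_div_sq {a b : ℝ} (c : ℝ) (ha : 0 < a) (hb : 0 < b) :
    ∫ x in a..b, c / x ^ 2 = c / a - c / b := by
  rw [integral_div_pow_of_pos c (by norm_num) ha hb]
  norm_num
  ring

theorem integral_div_cube {a b : ℝ} (c : ℝ) (ha : 0 < a) (hb : 0 < b) :
    ∫ x in a..b, c / x ^ 3 = c / (2 * a ^ 2) - c / (2 * b ^ 2) := by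
  rw [integral_div_pow_of_pos c (by norm_num) ha hb]
  norm_num
  field_simp
  ring

theorem setIntegral_prod_eq_integral_slices {α β E : Type*} [MeasurableSpace α]
    [MeasurableSpace β] {μ : Measure α} {ν : Measure β} [SFinite μ] [SFinite ν]
    [NormedAddCommGroup E] [NormedSpace ℝ E] {S : Set (α × β)} (hS : MeasurableSet S)
    {f : α × β → E} (hf : IntegrableOn f S (μ.prod ν)) :
    ∫ p in S, f p ∂(μ.prod ν) = ∫ y, ∫ x in (fun x => (x, y)) ⁻¹' S, f (x, y) ∂μ ∂ν := by
  rw [← integral_indicator hS, integral_prod_symm _ ((integrable_indicator_iff hS).2 hf)]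
  refine congrArg (integral ν) (funext fun y => ?_)
  rw [← integral_indicator (measurable_prodMk_right hS)]
  rfl

def triangle (r : ℝ) : Set (ℝ × ℝ) := {p | r < p.1 - p.2 ∧ p.1 < 1 ∧ 0 < p.2}

theorem isOpen_triangle (r : ℝ) : IsOpen (triangle r) :=
  (isOpen_lt continuous_const (continuous_fst.sub continuous_snd)).inter
    ((isOpen_lt continuous_fst continuous_const).inter (isOpen_lt continuous_const continuous_snd))

theorem preimage_prodMk_triangle {r s : ℝ} (hs : 0 < s) :
    (fun b => (b, s)) ⁻¹' triangle r = Ioo (s + r) 1 := by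
  ext b
  simp only [triangle, mem_preimage, mem_ofPred_eq, mem_Ioo]
  constructor
  · rintro ⟨h, hb, -⟩
    exact ⟨by linarith, hb⟩
  · rintro ⟨h, hb⟩
    exact ⟨by linarith, hb, hs⟩

theorem preimage_prodMk_triangle_eq_empty {r s : ℝ} (hs : s ∉ Ioc 0 (1 - r)) :
    (fun b => (b, s)) ⁻¹' triangle r = ∅ := by
  refine eq_empty_of_forall_notMem fun b ⟨h, hb, hs0⟩ => hs ⟨hs0, ?_⟩
  linarith

theorem setIntegral_triangle {r : ℝ} (hr : r ≤ 1) {f : ℝ × ℝ → ℝ}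
    (hf : IntegrableOn f (triangle r)) :
    ∫ p in triangle r, f p = ∫ s in 0..1 - r, ∫ b in s + r..1, f (b, s) := by
  rw [Measure.volume_eq_prod] at hf ⊢
  rw [setIntegral_prod_eq_integral_slices (isOpen_triangle r).measurableSet hf,
    intervalIntegral.integral_of_le (by linarith),
    ← setIntegral_eq_integral_of_forall_compl_eq_zero fun s hs => by
      rw [preimage_prodMk_triangle_eq_empty hs, Measure.restrict_empty, integral_zero_measure]]
  refine setIntegral_congr_fun measurableSet_Ioc fun s hs => ?_
  rw [preimage_prodMk_triangle hs.1, intervalIntegral.integral_of_le (by linarith [hs.2]),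
    integral_Ioc_eq_integral_Ioo]

theorem integrableOn_triangle {r : ℝ} (hr : 0 < r) (c : ℝ) (n : ℕ) :
    IntegrableOn (fun p : ℝ × ℝ => c / (p.1 - p.2) ^ n) (triangle r) := by
  set K : Set (ℝ × ℝ) := {p | r ≤ p.1 - p.2 ∧ p.1 ≤ 1 ∧ 0 ≤ p.2}
  have hK : IsCompact K := by
    refine (isCompact_Icc (a := ((0 : ℝ), (0 : ℝ))) (b := (1, 1))).of_isClosed_subset ?_ ?_
    · exact (isClosed_le continuous_const (continuous_fst.sub continuous_snd)).inter
        ((isClosed_le continuous_fst continuous_const).inter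
          (isClosed_le continuous_const continuous_snd))
    · rintro p ⟨h, h1, h2⟩
      exact ⟨⟨by linarith, h2⟩, ⟨h1, by linarith⟩⟩
  have hcont : ContinuousOn (fun p : ℝ × ℝ => c / (p.1 - p.2) ^ n) K :=
    continuousOn_const.div (by fun_prop) fun p hp => pow_ne_zero _ (by linarith [hp.1])
  exact (hcont.integrableOn_compact hK).mono_set fun p ⟨h, h1, h2⟩ => ⟨h.le, h1.le, h2.le⟩

theorem integral_div_one_sub_sq {r : ℝ} (c : ℝ) (hr : 0 < r) :
    ∫ s in (0 : ℝ)..1 - r, c / (1 - s) ^ 2 = c / r - c := by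
  rw [intervalIntegral.integral_comp_sub_left (fun u => c / u ^ 2), sub_sub_cancel, sub_zero,
    integral_div_sq c hr one_pos, div_one]

theorem integral_triangle {r : ℝ} (hr0 : 0 < r) (hr1 : r < 1) :
    ∫ p in triangle r, 2 * r ^ 2 / (p.1 - p.2) ^ 3 = (1 - r) ^ 2 := by
  have inner : ∀ s ∈ uIcc 0 (1 - r),
      ∫ b in s + r..1, 2 * r ^ 2 / (b - s) ^ 3 = 1 - r ^ 2 / (1 - s) ^ 2 := by
    intro s hs
    rw [uIcc_of_le (by linarith)] at hs
    rw [intervalIntegral.integral_comp_sub_right (fun u => 2 * r ^ 2 / u ^ 3), add_sub_cancel_left,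
      integral_div_cube _ hr0 (by linarith [hs.2])]
    field_simp
  have hint : IntervalIntegrable (fun s : ℝ => r ^ 2 / (1 - s) ^ 2) volume 0 (1 - r) := by
    refine ContinuousOn.intervalIntegrable (continuousOn_const.div (by fun_prop) fun s hs => ?_)
    rw [uIcc_of_le (by linarith)] at hs
    exact pow_ne_zero _ (by linarith [hs.2])
  rw [setIntegral_triangle hr1.le (integrableOn_triangle hr0 _ _),
    intervalIntegral.integral_congr inner,
    intervalIntegral.integral_sub intervalIntegrable_const hint, integral_div_one_sub_sq _ hr0]
  simp only [intervalIntegral.integral_const, smul_eq_mul, mul_one]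
  field_simp
  ring

theorem stmt_8 (r : ℝ) (hr0 : 0 < r) (hr1 : r < 1) :
    (∫ p in {p : ℝ × ℝ | r < p.1 - p.2 ∧ p.1 < 1 ∧ 0 < p.2},
        2 * r ^ 2 / (p.1 - p.2) ^ 3) +
      (∫ s in (0 : ℝ)..(1 - r), r ^ 2 / (1 - s) ^ 2) +
      (∫ b in r..1, r ^ 2 / b ^ 2) + r ^ 2 = 1 := by
  rw [← triangle, integral_triangle hr0 hr1, integral_div_one_sub_sq _ hr0,
    integral_div_sq _ hr0 one_pos]
  field_simp
  ring
end

section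
/- For r ∈ (0,1), the function S(v_B, v_S) = r²/(v_B−v_S)² solves the partial integral equation π(v_B,v_S)(v_B−v_S) − S(v_B,v_S) − ∫_0^{v_S} π(v_B,s) ds − π(v_B,0) = 0 on the region {(v_B,v_S) : v_B−v_S > r, v_B < 1, v_S > 0}, where π(v_B,v_S) = −∂S/∂v_B = 2r²/(v_B−v_S)³ and π(v_B,0) = r²/v_B². -/
/-! The integrand `2r²/(v_B - s)³` is the `s`-derivative of `S(v_B, s) = r²/(v_B - s)²`, so the
integral telescopes to `S(v_B, v_S) - r²/v_B²`; what is left is `π · (v_B - v_S) = 2 S`. -/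

open intervalIntegral Set
open scoped Interval

theorem hasDerivAt_div_sub_sq (a c x : ℝ) (hx : x ≠ c) :
    HasDerivAt (fun b : ℝ => a / (b - c) ^ 2) (-(2 * a / (x - c) ^ 3)) x := by
  have hsq : HasDerivAt (fun b : ℝ => (b - c) ^ 2) (2 * (x - c)) x := by
    simpa using ((hasDerivAt_id x).sub_const c).fun_pow 2
  have hx' := sub_ne_zero.2 hx
  refine ((hasDerivAt_const x a).fun_div hsq (pow_ne_zero 2 hx')).congr_deriv ?_
  field_simp
  ring

theorem integral_two_mul_div_sub_pow_three (a b u v : ℝ) (hb : b ∉ [[u, v]]) :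
    ∫ s in u..v, 2 * a / (b - s) ^ 3 = a / (b - v) ^ 2 - a / (b - u) ^ 2 := by
  have hne : ∀ s ∈ [[u, v]], s ≠ b := fun s hs h => hb (h ▸ hs)
  have hderiv : ∀ s ∈ [[u, v]],
      HasDerivAt (fun s : ℝ => a / (s - b) ^ 2) (2 * a / (b - s) ^ 3) s := fun s hs => by
    refine (hasDerivAt_div_sub_sq a b s (hne s hs)).congr_deriv ?_
    rw [← neg_sub b s, Odd.neg_pow (by decide), div_neg, neg_neg]
  have hint : IntervalIntegrable (fun s : ℝ => 2 * a / (b - s) ^ 3) MeasureTheory.volume u v :=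
    ContinuousOn.intervalIntegrable <| continuousOn_const.div (by fun_prop) fun s hs =>
      pow_ne_zero 3 (sub_ne_zero.2 (hne s hs).symm)
  rw [integral_eq_sub_of_hasDerivAt hderiv hint, ← neg_sub v b, ← neg_sub u b, neg_sq, neg_sq]

theorem stmt_10_general (r : ℝ) (hr0 : 0 < r) :
    ∀ vB vS : ℝ, r < vB - vS → vB < 1 → 0 < vS →
      HasDerivAt (fun b : ℝ => r ^ 2 / (b - vS) ^ 2) (-(2 * r ^ 2 / (vB - vS) ^ 3)) vB ∧
      (2 * r ^ 2 / (vB - vS) ^ 3) * (vB - vS) - r ^ 2 / (vB - vS) ^ 2 -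
        (∫ s in (0 : ℝ)..vS, 2 * r ^ 2 / (vB - s) ^ 3) - r ^ 2 / vB ^ 2 = 0 := by
  intro vB vS hgap _ hS
  have hpos : 0 < vB - vS := hr0.trans hgap
  refine ⟨hasDerivAt_div_sub_sq _ _ _ (sub_pos.1 hpos).ne', ?_⟩
  have hvB : vB ∉ [[0, vS]] := by
    rw [uIcc_of_le hS.le]
    exact fun h => hpos.not_ge (sub_nonpos.2 h.2)
  rw [integral_two_mul_div_sub_pow_three _ _ _ _ hvB, sub_zero]
  field_simp [hpos.ne']
  ring

theorem stmt_10 (r : ℝ) (hr0 : 0 < r) (hr1 : r < 1) :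
    ∀ vB vS : ℝ, r < vB - vS → vB < 1 → 0 < vS →
      HasDerivAt (fun b : ℝ => r ^ 2 / (b - vS) ^ 2) (-(2 * r ^ 2 / (vB - vS) ^ 3)) vB ∧
      (2 * r ^ 2 / (vB - vS) ^ 3) * (vB - vS) - r ^ 2 / (vB - vS) ^ 2 -
        (∫ s in (0 : ℝ)..vS, 2 * r ^ 2 / (vB - s) ^ 3) - r ^ 2 / vB ^ 2 = 0 :=
  stmt_10_general r hr0
end

section
/- Let r ∈ (0,1) and define q(v_B,v_S) = (v_B−v_S−r)/(1−r) if v_B−v_S > r and 0 otherwise, on [0,1]². Then the ex-post profit t(v) = (v_B−v_S)q(v) − ∫_0^{v_B} q(x,v_S) dx − ∫_{v_S}^1 q(v_B,x) dx equals (r/(1−r))·v_B − (r/(1−r))·v_S − r²/(1−r) for all (v_B,v_S) with v_B−v_S ≥ r, and t(v) = 0 when v_B − v_S ≤ r. -/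
/-- Trading rule of the random double auction with commission `r`. -/
noncomputable def rdaQ (r vB vS : ℝ) : ℝ :=
  if vB - vS > r then (vB - vS - r) / (1 - r) else 0

/-- Ex-post profit via the envelope formula. -/
noncomputable def rdaT (r vB vS : ℝ) : ℝ :=
  (vB - vS) * rdaQ r vB vS - (∫ x in (0 : ℝ)..vB, rdaQ r x vS)
    - (∫ x in vS..(1 : ℝ), rdaQ r vB x)

/-! With `m = max (vB - vS - r) 0`, the trading rule is `m / (1 - r)`: a shifted positive part in
either valuation. Since its kink lies on the correct side of each range of integration, both
integrals in the envelope formula equal `m ^ 2 / 2 / (1 - r)`, so `t = (vB - vS - m) * m / (1 - r)`,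
which is `r * m / (1 - r)` when trade occurs and `0` otherwise. -/

theorem integral_max_sub_const_zero_of_le {a b c : ℝ} (ha : a ≤ c) (hb : b ≤ c) :
    ∫ x in a..b, max (x - c) 0 = 0 := by
  refine (intervalIntegral.integral_congr fun x hx => ?_).trans intervalIntegral.integral_zero
  exact max_eq_right (by linarith [hx.2, max_le ha hb])

theorem integral_max_sub_const_zero {a c : ℝ} (b : ℝ) (ha : a ≤ c) :
    ∫ x in a..b, max (x - c) 0 = max (b - c) 0 ^ 2 / 2 := by
  rcases le_total b c with hbc | hcb
  · rw [integral_max_sub_const_zero_of_le ha hbc, max_eq_right (by linarith)]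
    ring
  have hint : ∀ u v : ℝ, IntervalIntegrable (fun x => max (x - c) 0) MeasureTheory.volume u v :=
    fun u v => ((continuous_id.sub continuous_const).max continuous_const).intervalIntegrable u v
  have hlin : ∫ x in c..b, max (x - c) 0 = ∫ x in c..b, (x - c) :=
    intervalIntegral.integral_congr fun x hx => by
      rw [Set.uIcc_of_le hcb] at hx
      exact max_eq_left (by linarith [hx.1])
  rw [← intervalIntegral.integral_add_adjacent_intervals (hint a c) (hint c b),
    integral_max_sub_const_zero_of_le ha le_rfl, zero_add, hlin,
    intervalIntegral.integral_comp_sub_right (fun x => x), integral_id, max_eq_left (by linarith)]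
  ring

theorem integral_max_const_sub_zero {b c : ℝ} (a : ℝ) (hb : c ≤ b) :
    ∫ x in a..b, max (c - x) 0 = max (c - a) 0 ^ 2 / 2 := by
  have hreflect := intervalIntegral.integral_comp_neg (a := a) (b := b) fun y => max (y - -c) 0
  have hright := integral_max_sub_const_zero (-a) (neg_le_neg hb)
  simp only [sub_neg_eq_add, neg_add_eq_sub] at hreflect hright
  rw [hreflect, hright]

theorem rdaQ_eq_max_div (r vB vS : ℝ) : rdaQ r vB vS = max (vB - vS - r) 0 / (1 - r) := by
  unfold rdaQ
  split_ifs with h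
  · rw [max_eq_left (by linarith)]
  · rw [max_eq_right (by linarith), zero_div]

theorem integral_rdaQ_buyer {r vB vS : ℝ} (h : 0 ≤ vS + r) :
    ∫ x in (0 : ℝ)..vB, rdaQ r x vS = max (vB - vS - r) 0 ^ 2 / 2 / (1 - r) := by
  simp only [rdaQ_eq_max_div, sub_sub, intervalIntegral.integral_div]
  rw [integral_max_sub_const_zero vB h]

theorem integral_rdaQ_seller {r vB vS : ℝ} (h : vB - r ≤ 1) :
    ∫ x in vS..(1 : ℝ), rdaQ r vB x = max (vB - vS - r) 0 ^ 2 / 2 / (1 - r) := by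
  simp only [rdaQ_eq_max_div, sub_right_comm _ _ r, intervalIntegral.integral_div]
  rw [integral_max_const_sub_zero vS h]

theorem rdaT_eq {r vB vS : ℝ} (hS : 0 ≤ vS + r) (hB : vB - r ≤ 1) :
    rdaT r vB vS = (vB - vS - max (vB - vS - r) 0) * max (vB - vS - r) 0 / (1 - r) := by
  rw [rdaT, rdaQ_eq_max_div, integral_rdaQ_buyer hS, integral_rdaQ_seller hB]
  ring

theorem stmt_11_general (r : ℝ) (hr0 : 0 < r) :
    ∀ vB vS : ℝ, vB ∈ Set.Icc (0 : ℝ) 1 → vS ∈ Set.Icc (0 : ℝ) 1 →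
      (vB - vS ≥ r →
        rdaT r vB vS = (r / (1 - r)) * vB - (r / (1 - r)) * vS - r ^ 2 / (1 - r)) ∧
      (vB - vS ≤ r → rdaT r vB vS = 0) := by
  rintro vB vS ⟨-, hB⟩ ⟨hS, -⟩
  rw [rdaT_eq (by linarith) (by linarith)]
  refine ⟨fun htrade => ?_, fun hno_trade => ?_⟩
  · rw [max_eq_left (by linarith)]
    ring
  · rw [max_eq_right (by linarith)]
    ring

theorem stmt_11 (r : ℝ) (hr0 : 0 < r) (hr1 : r < 1) :
    ∀ vB vS : ℝ, vB ∈ Set.Icc (0 : ℝ) 1 → vS ∈ Set.Icc (0 : ℝ) 1 →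
      (vB - vS ≥ r →
        rdaT r vB vS = (r / (1 - r)) * vB - (r / (1 - r)) * vS - r ^ 2 / (1 - r)) ∧
      (vB - vS ≤ r → rdaT r vB vS = 0) :=
  stmt_11_general r hr0
end

section
/- For any probability measure π on [0,1]² with marginal means ∫ v_B dπ = M_B and ∫ v_S dπ = M_S, where M_B + M_S = 1 and 0 < M_S < M_B < 1, and with r = 1 − √(1−(M_B−M_S)), the expected ex-post profit of the random double auction satisfies ∫ max{0, (r/(1−r))(v_B−v_S−r)} dπ ≥ r². -/
/-!
Since `max 0 x ≥ x`, the expected profit is at least the profit at the mean valuations,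
`r / (1 - r) * (M_B - M_S - r)`. The commission is chosen so that `1 - (M_B - M_S) = (1 - r) ^ 2`,
i.e. `M_B - M_S - r = r - r ^ 2`, and then this lower bound is exactly `r ^ 2`.
-/

open MeasureTheory

theorem integral_le_integral_max_zero {α : Type*} [MeasurableSpace α] (μ : Measure α)
    (g : α → ℝ) : ∫ x, g x ∂μ ≤ ∫ x, max 0 (g x) ∂μ := by
  by_cases hg : Integrable g μ
  · exact integral_mono hg ((integrable_zero α ℝ μ).sup hg) fun x => le_max_right _ _
  · rw [integral_undef hg]
    exact integral_nonneg fun x => le_max_left _ _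

theorem integrable_fst_snd_of_ae_mem_Icc_prod {μ : Measure (ℝ × ℝ)} [IsFiniteMeasure μ]
    {a b c d : ℝ} (h : ∀ᵐ p ∂μ, p ∈ Set.Icc a b ×ˢ Set.Icc c d) :
    Integrable Prod.fst μ ∧ Integrable Prod.snd μ :=
  ⟨.of_mem_Icc a b measurable_fst.aemeasurable (h.mono fun _ hp => hp.1),
    .of_mem_Icc c d measurable_snd.aemeasurable (h.mono fun _ hp => hp.2)⟩

theorem div_one_sub_mul_sub_sq {r : ℝ} (hr : r ≠ 1) : r / (1 - r) * (r - r ^ 2) = r ^ 2 := by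
  have : 1 - r ≠ 0 := sub_ne_zero.mpr hr.symm
  field_simp

theorem stmt_13_general (π : Measure (ℝ × ℝ)) [IsProbabilityMeasure π]
    (hsupp : π ((Set.Icc (0 : ℝ) 1 ×ˢ Set.Icc (0 : ℝ) 1)ᶜ) = 0)
    (M_B M_S : ℝ) (h0 : 0 < M_S) (h1 : M_B < 1)
    (hB : (∫ p, p.1 ∂π) = M_B) (hS : (∫ p, p.2 ∂π) = M_S) :
    (1 - Real.sqrt (1 - (M_B - M_S))) ^ 2 ≤
      ∫ p, max 0 ((1 - Real.sqrt (1 - (M_B - M_S))) / (1 - (1 - Real.sqrt (1 - (M_B - M_S)))) *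
        (p.1 - p.2 - (1 - Real.sqrt (1 - (M_B - M_S))))) ∂π := by
  set s := Real.sqrt (1 - (M_B - M_S))
  set r := 1 - s
  have hs_pos : 0 < s := Real.sqrt_pos.mpr (by linarith)
  have hs_sq : s ^ 2 = 1 - (M_B - M_S) := Real.sq_sqrt (by linarith)
  obtain ⟨hIB, hIS⟩ := integrable_fst_snd_of_ae_mem_Icc_prod (mem_ae_iff.mpr hsupp)
  have hIdiff : Integrable (fun p : ℝ × ℝ => p.1 - p.2) π := hIB.sub hIS
  have hmean : ∫ p, r / (1 - r) * (p.1 - p.2 - r) ∂π = r / (1 - r) * (M_B - M_S - r) := by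
    rw [integral_const_mul, integral_sub hIdiff (integrable_const r), integral_sub hIB hIS,
      hB, hS, integral_const, probReal_univ, one_smul]
  calc r ^ 2 = r / (1 - r) * (r - r ^ 2) := (div_one_sub_mul_sub_sq (by linarith)).symm
    _ = r / (1 - r) * (M_B - M_S - r) := by congr 1; linear_combination -hs_sq
    _ = ∫ p, r / (1 - r) * (p.1 - p.2 - r) ∂π := hmean.symm
    _ ≤ _ := integral_le_integral_max_zero π _

theorem stmt_13 (π : Measure (ℝ × ℝ)) [IsProbabilityMeasure π]
    (hsupp : π ((Set.Icc (0 : ℝ) 1 ×ˢ Set.Icc (0 : ℝ) 1)ᶜ) = 0)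
    (M_B M_S : ℝ) (h0 : 0 < M_S) (hlt : M_S < M_B) (h1 : M_B < 1)
    (hsum : M_B + M_S = 1)
    (hB : (∫ p, p.1 ∂π) = M_B) (hS : (∫ p, p.2 ∂π) = M_S) :
    (1 - Real.sqrt (1 - (M_B - M_S))) ^ 2 ≤
      ∫ p, max 0 ((1 - Real.sqrt (1 - (M_B - M_S))) / (1 - (1 - Real.sqrt (1 - (M_B - M_S)))) *
        (p.1 - p.2 - (1 - Real.sqrt (1 - (M_B - M_S))))) ∂π :=
  stmt_13_general π hsupp M_B M_S h0 h1 hB hS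
end

section
/- As r₁ + r₂ → 1 with r₁ fixed in (0,1), H₁(r₁,r₂) → (1 − r₁² + 2r₁)/2 and H₂(r₁,r₂) → (1−r₁)²/2, where H₁ and H₂ are as given; consequently H₁ + H₂ → 1 on the anti-diagonal. -/
open Filter Topology

noncomputable def H1'' (r₁ r₂ : ℝ) : ℝ :=
  (1 - r₂) * r₁ * (1 - r₁) ^ 2 / (1 - r₁ - r₂) ^ 2 * Real.log ((1 - r₂) / r₁)
    - r₁ * r₂ * (1 - r₁) / (1 - r₁ - r₂) + r₁

noncomputable def H2'' (r₁ r₂ : ℝ) : ℝ :=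
  r₁ * (1 - r₂) * r₂ ^ 2 / (1 - r₁ - r₂) ^ 2 * Real.log ((1 - r₂) / r₁)
    - r₁ * r₂ ^ 2 / (1 - r₁ - r₂)

/-!
Put `s = (1 - r₁ - r₂) / r₁`, so that `(1 - r₂) / r₁ = 1 + s` and `s → 0` as `r₂ → 1 - r₁`.
Writing `log (1 + s) = s + s² R(s)`, the terms of order `1 / (1 - r₁ - r₂)` in `H₁` and `H₂`
cancel exactly, leaving `H₁ = 1 + (1 - r₂)(1 - r₁)² R(s) / r₁` and
`H₂ = r₂² + (1 - r₂) r₂² R(s) / r₁`. The second-order Taylor bound for `log (1 + s)` gives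
`R(s) → -1/2`, and the limits follow by continuity.
-/

namespace Real

theorem abs_log_one_add_sub_self_add_sq_div_two_le {t : ℝ} (ht : |t| < 1) :
    |log (1 + t) - t + t ^ 2 / 2| ≤ |t| ^ 3 / (1 - |t|) := by
  have h := abs_log_sub_add_sum_range_le (x := -t) (by rwa [abs_neg]) 2
  simp only [Finset.sum_range_succ, Finset.sum_range_zero, sub_neg_eq_add, abs_neg] at h
  convert h using 2
  norm_num
  ring

theorem tendsto_log_one_add_sub_self_div_sq :
    Tendsto (fun t => (log (1 + t) - t) / t ^ 2) (𝓝[≠] 0) (𝓝 (-(1 / 2))) := by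
  rw [← tendsto_sub_nhds_zero_iff]
  have hbound : Tendsto (fun t : ℝ => |t| / (1 - |t|)) (𝓝[≠] 0) (𝓝 0) := by
    have : ContinuousAt (fun t : ℝ => |t| / (1 - |t|)) 0 := by
      fun_prop (disch := norm_num)
    simpa using this.tendsto.mono_left nhdsWithin_le_nhds
  refine squeeze_zero_norm' ?_ hbound
  filter_upwards [self_mem_nhdsWithin, nhdsWithin_le_nhds (eventually_abs_sub_lt 0 one_pos)]
    with t (ht₀ : t ≠ 0) ht
  rw [sub_zero] at ht
  have hsq : 0 < t ^ 2 := by positivity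
  calc ‖(log (1 + t) - t) / t ^ 2 - -(1 / 2)‖ = |log (1 + t) - t + t ^ 2 / 2| / t ^ 2 := by
        rw [norm_eq_abs, ← abs_of_pos hsq, ← abs_div, abs_of_pos hsq]
        congr 1
        field_simp
        ring
    _ ≤ |t| ^ 3 / (1 - |t|) / t ^ 2 := by
        gcongr
        exact abs_log_one_add_sub_self_add_sq_div_two_le ht
    _ = |t| / (1 - |t|) := by
        rw [← sq_abs t]
        field_simp

end Real

noncomputable def logRemainder (t : ℝ) : ℝ := (Real.log (1 + t) - t) / t ^ 2

section

variable {r₁ r₂ : ℝ}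

theorem log_one_sub_div_eq_log_one_add (hr₁ : r₁ ≠ 0) :
    Real.log ((1 - r₂) / r₁) = Real.log (1 + (1 - r₁ - r₂) / r₁) := by
  congr 1
  field_simp
  ring

theorem H1''_eq_one_add_mul_logRemainder (hr₁ : r₁ ≠ 0) (hr₂ : r₂ ≠ 1 - r₁) :
    H1'' r₁ r₂ = 1 + (1 - r₂) * (1 - r₁) ^ 2 / r₁ * logRemainder ((1 - r₁ - r₂) / r₁) := by
  have hε : 1 - r₁ - r₂ ≠ 0 := fun h => hr₂ (by linarith)
  rw [H1'', logRemainder, log_one_sub_div_eq_log_one_add hr₁]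
  field_simp
  ring

theorem H2''_eq_sq_add_mul_logRemainder (hr₁ : r₁ ≠ 0) (hr₂ : r₂ ≠ 1 - r₁) :
    H2'' r₁ r₂ = r₂ ^ 2 + (1 - r₂) * r₂ ^ 2 / r₁ * logRemainder ((1 - r₁ - r₂) / r₁) := by
  have hε : 1 - r₁ - r₂ ≠ 0 := fun h => hr₂ (by linarith)
  rw [H2'', logRemainder, log_one_sub_div_eq_log_one_add hr₁]
  field_simp
  ring

theorem tendsto_logRemainder_div (hr₁ : r₁ ≠ 0) :
    Tendsto (fun r₂ => logRemainder ((1 - r₁ - r₂) / r₁)) (𝓝[≠] (1 - r₁)) (𝓝 (-(1 / 2))) := by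
  refine Real.tendsto_log_one_add_sub_self_div_sq.comp ?_
  refine tendsto_nhdsWithin_of_tendsto_nhds_of_eventually_within _ ?_ ?_
  · have : ContinuousAt (fun r₂ => (1 - r₁ - r₂) / r₁) (1 - r₁) := by fun_prop
    simpa using this.tendsto.mono_left nhdsWithin_le_nhds
  · filter_upwards [self_mem_nhdsWithin] with r₂ (hr₂ : r₂ ≠ 1 - r₁)
    exact div_ne_zero (fun h => hr₂ (by linarith)) hr₁

theorem tendsto_add_mul_logRemainder (hr₁ : r₁ ≠ 0) {p q : ℝ → ℝ}
    (hp : ContinuousAt p (1 - r₁)) (hq : ContinuousAt q (1 - r₁)) :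
    Tendsto (fun r₂ => p r₂ + q r₂ * logRemainder ((1 - r₁ - r₂) / r₁)) (𝓝[≠] (1 - r₁))
      (𝓝 (p (1 - r₁) - q (1 - r₁) / 2)) := by
  convert (hp.tendsto.mono_left nhdsWithin_le_nhds).add
    ((hq.tendsto.mono_left nhdsWithin_le_nhds).mul (tendsto_logRemainder_div hr₁)) using 2
  ring

end

theorem stmt_17 (r₁ : ℝ) (h₁ : r₁ ∈ Set.Ioo (0 : ℝ) 1) :
    Tendsto (fun r₂ => H1'' r₁ r₂) (𝓝[≠] (1 - r₁)) (𝓝 ((1 - r₁ ^ 2 + 2 * r₁) / 2)) ∧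
    Tendsto (fun r₂ => H2'' r₁ r₂) (𝓝[≠] (1 - r₁)) (𝓝 ((1 - r₁) ^ 2 / 2)) ∧
    Tendsto (fun r₂ => H1'' r₁ r₂ + H2'' r₁ r₂) (𝓝[≠] (1 - r₁)) (𝓝 1) := by
  have hr₁ : r₁ ≠ 0 := h₁.1.ne'
  have hH1 : Tendsto (fun r₂ => H1'' r₁ r₂) (𝓝[≠] (1 - r₁)) (𝓝 ((1 - r₁ ^ 2 + 2 * r₁) / 2)) := by
    have h := tendsto_add_mul_logRemainder hr₁ (p := fun _ => 1)
      (q := fun r₂ => (1 - r₂) * (1 - r₁) ^ 2 / r₁) (by fun_prop) (by fun_prop)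
    rw [show 1 - (1 - (1 - r₁)) * (1 - r₁) ^ 2 / r₁ / 2 = (1 - r₁ ^ 2 + 2 * r₁) / 2 by
      field_simp; ring] at h
    exact h.congr' <| eventually_nhdsWithin_of_forall fun r₂ hr₂ =>
      (H1''_eq_one_add_mul_logRemainder hr₁ hr₂).symm
  have hH2 : Tendsto (fun r₂ => H2'' r₁ r₂) (𝓝[≠] (1 - r₁)) (𝓝 ((1 - r₁) ^ 2 / 2)) := by
    have h := tendsto_add_mul_logRemainder hr₁ (p := fun r₂ => r₂ ^ 2)
      (q := fun r₂ => (1 - r₂) * r₂ ^ 2 / r₁) (by fun_prop) (by fun_prop)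
    rw [show (1 - r₁) ^ 2 - (1 - (1 - r₁)) * (1 - r₁) ^ 2 / r₁ / 2 = (1 - r₁) ^ 2 / 2 by
      field_simp; ring] at h
    exact h.congr' <| eventually_nhdsWithin_of_forall fun r₂ hr₂ =>
      (H2''_eq_sq_add_mul_logRemainder hr₁ hr₂).symm
  refine ⟨hH1, hH2, ?_⟩
  convert hH1.add hH2 using 2
  ring
end

section
/- Suppose M_B, M_S ∈ (0,1) with √(M_S) + √(1−M_B) < 1. Set c₁* = 1 − √(1−M_B) and c₂* = √(M_S). Then the function K(c₁,c₂) = ((c₁−c₂)/(1−c₁))·M_B − ((c₁−c₂)/c₂)·M_S − c₁(c₁−c₂)/(1−c₁) over the domain 0 < c₂ < c₁ < 1 attains its maximum at (c₁*, c₂*), with maximum value (1 − √(M_S) − √(1−M_B))². -/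
/-!
Substituting `M_B = 1 - a²` and `M_S = s²` factors `K` as `(c₁ - c₂) (1 - a² / (1 - c₁) - s² / c₂)`.
AM-GM gives `a² / x ≥ 2a - x`, so with `d = c₁ - c₂` and `m = 1 - s - a` the second factor is at most
`2m - d`, and `d (2m - d) = m² - (d - m)² ≤ m²`, with equality at `1 - c₁ = a`, `c₂ = s`.
-/

noncomputable def Kfun (M_B M_S c₁ c₂ : ℝ) : ℝ :=
  (c₁ - c₂) / (1 - c₁) * M_B - (c₁ - c₂) / c₂ * M_S - c₁ * (c₁ - c₂) / (1 - c₁)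

lemma Kfun_eq_mul {M_B M_S c₁ c₂ : ℝ} (hc₁ : c₁ ≠ 1) (hc₂ : c₂ ≠ 0) :
    Kfun M_B M_S c₁ c₂ = (c₁ - c₂) * (1 - (1 - M_B) / (1 - c₁) - M_S / c₂) := by
  have hc₁' : 1 - c₁ ≠ 0 := sub_ne_zero.2 hc₁.symm
  unfold Kfun
  field_simp
  ring

lemma two_mul_sub_le_sq_div {x : ℝ} (a : ℝ) (hx : 0 < x) : 2 * a - x ≤ a ^ 2 / x := by
  rw [le_div_iff₀ hx]
  nlinarith [sq_nonneg (a - x)]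

lemma Kfun_le_sq {M_B M_S a s c₁ c₂ : ℝ} (ha : a ^ 2 = 1 - M_B) (hs : s ^ 2 = M_S)
    (hc₂ : 0 < c₂) (hc₁₂ : c₂ < c₁) (hc₁ : c₁ < 1) :
    Kfun M_B M_S c₁ c₂ ≤ (1 - s - a) ^ 2 := by
  rw [Kfun_eq_mul hc₁.ne hc₂.ne', ← ha, ← hs]
  have hA := two_mul_sub_le_sq_div a (sub_pos.2 hc₁)
  have hS := two_mul_sub_le_sq_div s hc₂
  calc (c₁ - c₂) * (1 - a ^ 2 / (1 - c₁) - s ^ 2 / c₂)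
      ≤ (c₁ - c₂) * (2 * (1 - s - a) - (c₁ - c₂)) := by
        exact mul_le_mul_of_nonneg_left (by linarith) (by linarith)
    _ = (1 - s - a) ^ 2 - ((c₁ - c₂) - (1 - s - a)) ^ 2 := by ring
    _ ≤ (1 - s - a) ^ 2 := sub_le_self _ (sq_nonneg _)

lemma Kfun_one_sub_eq_sq {M_B M_S a s : ℝ} (ha : a ^ 2 = 1 - M_B) (hs : s ^ 2 = M_S)
    (ha₀ : a ≠ 0) (hs₀ : s ≠ 0) :
    Kfun M_B M_S (1 - a) s = (1 - s - a) ^ 2 := by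
  rw [Kfun_eq_mul (by simpa using ha₀) hs₀, ← ha, ← hs, sub_sub_cancel]
  field_simp
  ring

theorem stmt_18 (M_B M_S : ℝ) (hB : M_B ∈ Set.Ioo (0 : ℝ) 1) (hS : M_S ∈ Set.Ioo (0 : ℝ) 1)
    (h : Real.sqrt M_S + Real.sqrt (1 - M_B) < 1) :
    (0 < Real.sqrt M_S ∧ Real.sqrt M_S < 1 - Real.sqrt (1 - M_B) ∧
      1 - Real.sqrt (1 - M_B) < 1) ∧
    Kfun M_B M_S (1 - Real.sqrt (1 - M_B)) (Real.sqrt M_S) =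
      (1 - Real.sqrt M_S - Real.sqrt (1 - M_B)) ^ 2 ∧
    (∀ c₁ c₂ : ℝ, 0 < c₂ → c₂ < c₁ → c₁ < 1 →
      Kfun M_B M_S c₁ c₂ ≤ Kfun M_B M_S (1 - Real.sqrt (1 - M_B)) (Real.sqrt M_S)) := by
  have hB' : 0 < 1 - M_B := sub_pos.2 hB.2
  have ha := Real.sq_sqrt hB'.le
  have hs := Real.sq_sqrt hS.1.le
  have ha₀ : 0 < Real.sqrt (1 - M_B) := Real.sqrt_pos.2 hB'
  have hs₀ : 0 < Real.sqrt M_S := Real.sqrt_pos.2 hS.1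
  have hmax := Kfun_one_sub_eq_sq ha hs ha₀.ne' hs₀.ne'
  refine ⟨⟨hs₀, by linarith, by linarith⟩, hmax, fun c₁ c₂ hc₂ hc₁₂ hc₁ => ?_⟩
  exact hmax ▸ Kfun_le_sq ha hs hc₂ hc₁₂ hc₁
end
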